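/- Let E be a Moran set whose induced augmented tree (X, 𝔈) is rearrangeable. Then E is totally disconnected in the Euclidean topology of ℝ^d. -/

import Mathlib

open Metric Set Filter

attribute [local instance] Classical.propDecidable

noncomputable section

namespace MoranPaper

/-- Points of `ℝ^d`. -/
abbrev Pt (d : ℕ) := EuclideanSpace ℝ (Fin d)

/-- `w` is an admissible word: the letter at (0-indexed) position `j`
(corresponding to step `j+1`) lies in `[1, n j]`, where `n j` encodes `n_{j+1}`. -/
def IsWord (n : ℕ → ℕ) (w : List ℕ) : Prop :=
  ∀ j (h : j < w.length), 1 ≤ w.get ⟨j, h⟩ ∧ w.get ⟨j, h⟩ ≤ n j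

/-- The set `D_k` of words of length `k`. -/
def WordsLen (n : ℕ → ℕ) (k : ℕ) : Set (List ℕ) := {w | IsWord n w ∧ w.length = k}

/-- A Moran structure on the data `(J, (n_k), (r_k))`:  a family of sets `J_w`
indexed by words, with `J_∅ = J`, each `J_w` a similar copy of `J`, children
contained in the parent with pairwise disjoint interiors, and prescribed
diameter ratios. -/
structure MoranStructure (d : ℕ) (J : Set (Pt d)) (n : ℕ → ℕ) (r : ℕ → ℝ) where
  Jset : List ℕ → Set (Pt d)
  root_eq : Jset [] = J
  similar : ∀ w, IsWord n w → ∃ (S : Pt d → Pt d) (c : ℝ), 0 < c ∧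
      (∀ x y, dist (S x) (S y) = c * dist x y) ∧ Jset w = S '' J
  nested : ∀ w, IsWord n w → ∀ a, 1 ≤ a → a ≤ n w.length →
      Jset (w ++ [a]) ⊆ Jset w
  disjoint_int : ∀ w, IsWord n w → ∀ a b, 1 ≤ a → a ≤ n w.length →
      1 ≤ b → b ≤ n w.length → a ≠ b →
      interior (Jset (w ++ [a])) ∩ interior (Jset (w ++ [b])) = ∅
  diam_ratio : ∀ w, IsWord n w → ∀ a, 1 ≤ a → a ≤ n w.length →
      Metric.diam (Jset (w ++ [a])) = r w.length * Metric.diam (Jset w)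

/-- Standing hypotheses on the Moran data; `R` plays the role of `r = inf_k r_k > 0`. -/
structure MoranData (d : ℕ) (J : Set (Pt d)) (n : ℕ → ℕ) (r : ℕ → ℝ) (R : ℝ) : Prop where
  dim_pos : 1 ≤ d
  compact : IsCompact J
  int_nonempty : (interior J).Nonempty
  two_le : ∀ k, 2 ≤ n k
  r_pos : ∀ k, 0 < r k
  r_lt_one : ∀ k, r k < 1
  nr_le : ∀ k, (n k : ℝ) * r k ≤ 1
  R_pos : 0 < R
  R_inf : R = ⨅ k, r k

/-- The Moran set `E = ⋂_k ⋃_{w ∈ D_k} J_w`. -/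
def MoranSet {d : ℕ} {J : Set (Pt d)} {n : ℕ → ℕ} {r : ℕ → ℝ}
    (M : MoranStructure d J n r) : Set (Pt d) :=
  ⋂ k, ⋃ w ∈ WordsLen n k, M.Jset w

/-- The product `r_1 ⋯ r_k`. -/
def prodR (r : ℕ → ℝ) (k : ℕ) : ℝ := ∏ j ∈ Finset.range k, r j

/-- The level `X_m`:  `X_0 = {∅}`, and for `m ≥ 1`,
`X_m = {w : r_1⋯r_k ≤ R^m < r_1⋯r_{k-1}}` where `k` is the length of `w`. -/
def XLevel (n : ℕ → ℕ) (r : ℕ → ℝ) (R : ℝ) (m : ℕ) : Set (List ℕ) :=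
  if m = 0 then {([] : List ℕ)}
  else {w | IsWord n w ∧ prodR r w.length ≤ R ^ m ∧ R ^ m < prodR r (w.length - 1)}

/-- The vertex set `X = ⋃_m X_m`. -/
def XV (n : ℕ → ℕ) (r : ℕ → ℝ) (R : ℝ) : Set (List ℕ) := ⋃ m, XLevel n r R m

/-- `v` is the parent (first ancestor) of `u`:  `v` is the initial segment
of `u` lying one level above `u`. -/
def IsParent (n : ℕ → ℕ) (r : ℕ → ℝ) (R : ℝ) (v u : List ℕ) : Prop :=
  v ≠ u ∧ v <+: u ∧ ∃ m, 1 ≤ m ∧ u ∈ XLevel n r R m ∧ v ∈ XLevel n r R (m - 1)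

/-- Vertical edge relation `𝔈_v` (as an unordered relation). -/
def Evert (n : ℕ → ℕ) (r : ℕ → ℝ) (R : ℝ) (u v : List ℕ) : Prop :=
  IsParent n r R u v ∨ IsParent n r R v u

variable {d : ℕ} {J : Set (Pt d)} {n : ℕ → ℕ} {r : ℕ → ℝ}

/-- Horizontal edge relation `𝔈_h`: distinct words on a common level `X_m`, `m ≥ 1`,
whose Moran pieces intersect. -/
def Ehor (M : MoranStructure d J n r) (R : ℝ) (u v : List ℕ) : Prop :=
  u ≠ v ∧ ∃ m, 1 ≤ m ∧ u ∈ XLevel n r R m ∧ v ∈ XLevel n r R m ∧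
    (M.Jset u ∩ M.Jset v).Nonempty

/-- The induced augmented tree `(X, 𝔈)`, `𝔈 = 𝔈_v ∪ 𝔈_h`, as a graph on all words
(words outside `X` are isolated vertices). -/
def AugGraph (M : MoranStructure d J n r) (R : ℝ) : SimpleGraph (List ℕ) where
  Adj u v := Evert n r R u v ∨ Ehor M R u v
  symm := by
    constructor
    rintro u v (h | ⟨hne, m, hm, hu, hv, hJ⟩)
    · exact Or.inl h.symm
    · exact Or.inr ⟨hne.symm, m, hm, hv, hu, by rwa [Set.inter_comm]⟩
  loopless := by
    constructor
    rintro u ((⟨h, -⟩ | ⟨h, -⟩) | ⟨h, -⟩) <;> exact h rfl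

/-- The tree `(X, 𝔈_v)` with only the vertical edges. -/
def TreeGraph (n : ℕ → ℕ) (r : ℕ → ℝ) (R : ℝ) : SimpleGraph (List ℕ) where
  Adj u v := Evert n r R u v
  symm := ⟨fun _ _ h => h.symm⟩
  loopless := by constructor; rintro u (⟨h, -⟩ | ⟨h, -⟩) <;> exact h rfl

/-- The graph `(X, 𝔈_h)` with only the horizontal edges. -/
def HorGraph (M : MoranStructure d J n r) (R : ℝ) : SimpleGraph (List ℕ) where
  Adj u v := Ehor M R u v
  symm := by
    constructor
    rintro u v ⟨hne, m, hm, hu, hv, hJ⟩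
    exact ⟨hne.symm, m, hm, hv, hu, by rwa [Set.inter_comm]⟩
  loopless := by constructor; rintro u ⟨h, -⟩; exact h rfl

/-- Gromov product `⟨x,y⟩ = (d(o,x) + d(o,y) - d(x,y))/2` with respect to a base point `o`. -/
def gromovD {V : Type*} (G : SimpleGraph V) (o x y : V) : ℝ :=
  ((G.dist o x : ℝ) + (G.dist o y : ℝ) - (G.dist x y : ℝ)) / 2

/-- Condition (H): there is `C' > 0` such that on every level `X_m` (`m ≥ 1`),
two pieces either intersect or are at distance at least `C' R^m`. -/
def CondH (M : MoranStructure d J n r) (R : ℝ) : Prop :=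
  ∃ C' : ℝ, 0 < C' ∧ ∀ m, 1 ≤ m → ∀ u ∈ XLevel n r R m, ∀ v ∈ XLevel n r R m,
    (M.Jset u ∩ M.Jset v).Nonempty ∨
    ∀ p ∈ M.Jset u, ∀ q ∈ M.Jset v, C' * R ^ m ≤ dist p q

/-- `T` is a horizontal connected component: a maximal subset of some level `X_m`
which is connected in the horizontal graph. -/
def IsHCC (M : MoranStructure d J n r) (R : ℝ) (T : Set (List ℕ)) : Prop :=
  ∃ m, T ⊆ XLevel n r R m ∧ ((HorGraph M R).induce T).Connected ∧
    ∀ T', T ⊆ T' → T' ⊆ XLevel n r R m → ((HorGraph M R).induce T').Connected → T' = T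

/-- The common suffix set `Σ_m` of the level `X_m`: words `w` with `uw ∈ X_{m+1}`
for (some, equivalently all) `u ∈ X_m`. -/
def SigmaSet (n : ℕ → ℕ) (r : ℕ → ℝ) (R : ℝ) (m : ℕ) : Set (List ℕ) :=
  {w | ∃ u ∈ XLevel n r R m, u ++ w ∈ XLevel n r R (m + 1)}

/-- The offspring set `TΣ_m ⊆ X_{m+1}` of a set `T ⊆ X_m`. -/
def TSigma (n : ℕ → ℕ) (r : ℕ → ℝ) (R : ℝ) (m : ℕ) (T : Set (List ℕ)) : Set (List ℕ) :=
  {x | ∃ u ∈ T, ∃ w ∈ SigmaSet n r R m, x = u ++ w}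

/-- The augmented tree is rearrangeable:  horizontal connected components have
uniformly bounded cardinality, and for every horizontal connected component `T ⊆ X_m`
with `#T = b`, the offspring set `TΣ_m` can be partitioned into `b` groups (indexed by
the elements of `T`), each group being a union of horizontal connected components and
having exactly `#Σ_m` elements. -/
def Rearrangeable (M : MoranStructure d J n r) (R : ℝ) : Prop :=
  (∃ L : ℕ, ∀ T, IsHCC M R T → T.Finite ∧ T.ncard ≤ L) ∧
  ∀ m T, T ⊆ XLevel n r R m → IsHCC M R T →
    ∃ g : List ℕ → List ℕ,
      (∀ x ∈ TSigma n r R m T, g x ∈ T) ∧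
      (∀ Z, IsHCC M R Z → Z ⊆ TSigma n r R m T → ∀ x ∈ Z, ∀ y ∈ Z, g x = g y) ∧
      (∀ i ∈ T, {x ∈ TSigma n r R m T | g x = i}.ncard = (SigmaSet n r R m).ncard)

/-- `C` is a (topological) connected component of `A`. -/
def IsRelCC {α : Type*} [TopologicalSpace α] (C A : Set α) : Prop :=
  ∃ x ∈ A, C = connectedComponentIn A x

/-- Condition (v): there is `L` such that any `T ⊆ D_{k-1}` for which `⋃_{i∈T} J_i`
is a connected component of `⋃_{i∈D_{k-1}} J_i` satisfies `#T ≤ L`. -/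
def CondV (M : MoranStructure d J n r) : Prop :=
  ∃ L : ℕ, ∀ k, 1 ≤ k → ∀ T ⊆ WordsLen n (k - 1),
    IsRelCC (⋃ i ∈ T, M.Jset i) (⋃ i ∈ WordsLen n (k - 1), M.Jset i) →
    T.Finite ∧ T.ncard ≤ L

/-- Condition (vi): for any such `T` (with `#T = b`), the connected components of
`⋃_{i∈T} ⋃_{j=1}^{n_k} J_{ij}` can be partitioned into `b` groups (indexed by the
elements of `T`) so that the union of the components in each group is a union of
exactly `n_k` of the sets `J_{ij}`. -/
def CondVI (M : MoranStructure d J n r) : Prop :=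
  ∀ k, 1 ≤ k → ∀ T ⊆ WordsLen n (k - 1),
    IsRelCC (⋃ i ∈ T, M.Jset i) (⋃ i ∈ WordsLen n (k - 1), M.Jset i) →
    ∃ f : Set (Pt d) → List ℕ,
      (∀ C, IsRelCC C (⋃ u ∈ T, ⋃ j ∈ Set.Icc 1 (n (k - 1)), M.Jset (u ++ [j])) → f C ∈ T) ∧
      ∀ i ∈ T, ∃ W : Finset (List ℕ × ℕ),
        (∀ p ∈ W, p.1 ∈ T ∧ 1 ≤ p.2 ∧ p.2 ≤ n (k - 1)) ∧
        W.card = n (k - 1) ∧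
        (⋃ C ∈ {C | IsRelCC C (⋃ u ∈ T, ⋃ j ∈ Set.Icc 1 (n (k - 1)), M.Jset (u ++ [j]))
            ∧ f C = i}, C)
          = ⋃ p ∈ W, M.Jset (p.1 ++ [p.2])

/-- A geodesic ray of the induced augmented tree: `u_m ∈ X_m` and `u_m = (u_{m+1})⁻¹`. -/
def IsRay (n : ℕ → ℕ) (r : ℕ → ℝ) (R : ℝ) (u : ℕ → List ℕ) : Prop :=
  (∀ m, u m ∈ XLevel n r R m) ∧ ∀ m, IsParent n r R (u m) (u (m + 1))

/-- Geodesic rays as a type. -/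
def MRay (n : ℕ → ℕ) (r : ℕ → ℝ) (R : ℝ) := {u : ℕ → List ℕ // IsRay n r R u}

/-- `t(ξ,η) = liminf_m ⟨u_m, v_m⟩`, valued in `EReal`. -/
def tLim {V : Type*} (G : SimpleGraph V) (o : V) (u v : ℕ → V) : EReal :=
  Filter.liminf (fun m => ((gromovD G o (u m) (v m) : ℝ) : EReal)) Filter.atTop

/-- `R ^ t` for `t ∈ EReal`, with the convention `R ^ ∞ = 0`. -/
def rpowE (R : ℝ) (t : EReal) : ℝ := if t = ⊤ then 0 else R ^ t.toReal

/-- The hyperbolic boundary of the induced augmented tree: equivalence classes of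
geodesic rays, two rays being equivalent when `t(ξ,η) = ∞`. -/
def MBoundary (M : MoranStructure d J n r) (R : ℝ) :=
  Quot (fun ξ η : MRay n r R => tLim (AugGraph M R) [] ξ.1 η.1 = ⊤)

/-- The class of a ray in the hyperbolic boundary. -/
def mkB (M : MoranStructure d J n r) (R : ℝ) (ξ : MRay n r R) : MBoundary M R :=
  Quot.mk _ ξ

/-- The metric `ρ_a` on the hyperbolic boundary:
`ρ_a(ξ̄,η̄) = exp(-a · inf{t(ξ,η) : ξ ∈ ξ̄, η ∈ η̄})` for distinct classes, and `0` otherwise. -/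
def mrho (M : MoranStructure d J n r) (R a : ℝ) (p q : MBoundary M R) : ℝ :=
  if p = q then 0
  else Real.exp (-a * (sInf {s : EReal | ∃ ξ η : MRay n r R,
    mkB M R ξ = p ∧ mkB M R η = q ∧ s = tLim (AugGraph M R) [] ξ.1 η.1}).toReal)

/-- An abstract augmented tree in the sense of Kaimanovich: a rooted tree (encoded
by a parent map and a level function) together with a symmetric horizontal edge
relation `Eh` joining distinct vertices of a common level whose parents are equal
or horizontally joined. -/
structure AugmentedTree (V : Type*) where
  root : V
  parent : V → V
  lvl : V → ℕ
  lvl_root : lvl root = 0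
  lvl_parent : ∀ x, x ≠ root → lvl (parent x) + 1 = lvl x
  Eh : V → V → Prop
  Eh_symm : ∀ x y, Eh x y → Eh y x
  Eh_ne : ∀ x y, Eh x y → x ≠ y
  Eh_lvl : ∀ x y, Eh x y → lvl x = lvl y
  Eh_parent : ∀ x y, Eh x y → parent x = parent y ∨ Eh (parent x) (parent y)

namespace AugmentedTree

variable {V : Type*} (T : AugmentedTree V)

/-- The vertical (tree) edge relation. -/
def Ev (x y : V) : Prop :=
  (x ≠ T.root ∧ T.parent x = y) ∨ (y ≠ T.root ∧ T.parent y = x)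

/-- The graph `(X, 𝔈)`, `𝔈 = 𝔈_v ∪ 𝔈_h`. -/
def graph : SimpleGraph V where
  Adj x y := x ≠ y ∧ (T.Ev x y ∨ T.Eh x y)
  symm := by
    constructor
    rintro x y ⟨hne, h | h⟩
    · exact ⟨hne.symm, Or.inl h.symm⟩
    · exact ⟨hne.symm, Or.inr (T.Eh_symm x y h)⟩
  loopless := ⟨fun _ h => h.1 rfl⟩

/-- Gromov product `⟨x,y⟩ = (|x| + |y| - d(x,y))/2` (one has `d(o,x) = |x| = lvl x`). -/
def gromov (x y : V) : ℝ :=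
  ((T.lvl x : ℝ) + (T.lvl y : ℝ) - (T.graph.dist x y : ℝ)) / 2

/-- Gromov hyperbolicity. -/
def Hyperbolic : Prop :=
  ∃ δ : ℝ, 0 ≤ δ ∧ ∀ x y z : V,
    min (T.gromov x z) (T.gromov z y) - δ ≤ T.gromov x y

/-- A geodesic ray from the root: `x_0 = o` and `x_m = (x_{m+1})⁻¹`. -/
def IsRayT (x : ℕ → V) : Prop := x 0 = T.root ∧ ∀ m, T.parent (x (m + 1)) = x m

/-- Geodesic rays from the root, as a type. -/
def Ray := {x : ℕ → V // T.IsRayT x}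

/-- `t(ξ,η) = liminf_m ⟨x_m, y_m⟩`, valued in `EReal`. -/
def tvalT (ξ η : T.Ray) : EReal :=
  Filter.liminf (fun m => ((T.gromov (ξ.1 m) (η.1 m) : ℝ) : EReal)) Filter.atTop

/-- The hyperbolic boundary: classes of geodesic rays, two rays being equivalent
when `t(ξ,η) = ∞`. -/
def Boundary := Quot (fun ξ η : T.Ray => T.tvalT ξ η = ⊤)

/-- The class of a ray in the boundary. -/
def mkBd (ξ : T.Ray) : T.Boundary := Quot.mk _ ξ

/-- The metric `ρ_a` on the hyperbolic boundary. -/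
def rho (a : ℝ) (p q : T.Boundary) : ℝ :=
  if p = q then 0
  else Real.exp (-a * (sInf {s : EReal | ∃ ξ η : T.Ray,
    T.mkBd ξ = p ∧ T.mkBd η = q ∧ s = T.tvalT ξ η}).toReal)

end AugmentedTree

end MoranPaper

end

/-!
Suppose `p ≠ q` lie in a preconnected subset `t` of `E` and fix a level `X_m`, `m ≥ 1`. Its
pieces `J_u` are finitely many compact sets covering `E`, and the pieces indexed by a horizontal
connected component `S` are disjoint from all the other pieces of the level; hence `t` lies in
the pieces of the component `S` it meets. A path in `S` joins the pieces containing `p` and `q`,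
and every piece of `X_m` has diameter at most `R^m diam J`, so `|p - q| ≤ #S · R^m diam J`.
Rearrangeability bounds `#S` uniformly, and letting `m → ∞` gives `p = q`.
-/

theorem IsPreconnected.subset_biUnion_of_closed_of_inter_nonempty {X ι : Type*}
    [TopologicalSpace X] {t : Set X} (ht : IsPreconnected t) {F S : Set ι} (hF : F.Finite)
    {K : ι → Set X} (hK : ∀ i ∈ F, IsClosed (K i)) (htF : t ⊆ ⋃ i ∈ F, K i) (hSF : S ⊆ F)
    (hS : ∀ i ∈ S, ∀ j ∈ F, (K i ∩ K j).Nonempty → j ∈ S)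
    (hmeet : (t ∩ ⋃ i ∈ S, K i).Nonempty) : t ⊆ ⋃ i ∈ S, K i := by
  have hdisj : Disjoint (⋃ i ∈ S, K i) (⋃ j ∈ F \ S, K j) := by
    refine Set.disjoint_left.2 fun x hxS hxF => ?_
    obtain ⟨i, hi, hxi⟩ := Set.mem_iUnion₂.1 hxS
    obtain ⟨j, hj, hxj⟩ := Set.mem_iUnion₂.1 hxF
    exact hj.2 (hS i hi j hj.1 ⟨x, hxi, hxj⟩)
  have hcover : t ⊆ (⋃ i ∈ S, K i) ∪ ⋃ j ∈ F \ S, K j := by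
    intro x hx
    obtain ⟨j, hj, hxj⟩ := Set.mem_iUnion₂.1 (htF hx)
    by_cases hjS : j ∈ S
    · exact Or.inl (Set.mem_biUnion hjS hxj)
    · exact Or.inr (Set.mem_biUnion ⟨hj, hjS⟩ hxj)
  refine (isPreconnected_iff_subset_of_disjoint_closed.1 ht _ _
    ((hF.subset hSF).isClosed_biUnion fun i hi => hK i (hSF hi))
    (hF.sdiff.isClosed_biUnion fun j hj => hK j hj.1) hcover
    (by rw [hdisj.inter_eq, Set.inter_empty])).resolve_right ?_
  obtain ⟨x, hxt, hxS⟩ := hmeet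
  exact fun h => hdisj.ne_of_mem hxS (h hxt) rfl

section GraphChains

variable {V X : Type*} [PseudoMetricSpace X] {G : SimpleGraph V} {K : V → Set X} {δ : ℝ}

theorem dist_le_length_add_one_mul_of_walk (hadj : ∀ u v, G.Adj u v → (K u ∩ K v).Nonempty)
    (hK : ∀ v, ∀ x ∈ K v, ∀ y ∈ K v, dist x y ≤ δ) {u v : V} (W : G.Walk u v) :
    ∀ p ∈ K u, ∀ q ∈ K v, dist p q ≤ (W.length + 1) * δ := by
  induction W with
  | nil => intro p hp q hq; simpa using hK _ p hp q hq
  | @cons a b c h W ih =>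
    intro p hp q hq
    obtain ⟨z, hza, hzb⟩ := hadj a b h
    calc dist p q ≤ dist p z + dist z q := dist_triangle p z q
      _ ≤ δ + (W.length + 1) * δ := add_le_add (hK a p hp z hza) (ih z hzb q hq)
      _ = ((W.cons h).length + 1) * δ := by
          rw [SimpleGraph.Walk.length_cons]; push_cast; ring

theorem dist_le_card_mul_of_connected [Finite V] (hG : G.Connected)
    (hadj : ∀ u v, G.Adj u v → (K u ∩ K v).Nonempty)
    (hK : ∀ v, ∀ x ∈ K v, ∀ y ∈ K v, dist x y ≤ δ) {u v : V} :
    ∀ p ∈ K u, ∀ q ∈ K v, dist p q ≤ Nat.card V * δ := by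
  have := Fintype.ofFinite V
  intro p hp q hq
  let P := (hG.preconnected u v).some.toPath
  have hδ : 0 ≤ δ := dist_nonneg.trans (hK u p hp p hp)
  calc dist p q ≤ ((P : G.Walk u v).length + 1) * δ :=
        dist_le_length_add_one_mul_of_walk hadj hK _ p hp q hq
    _ ≤ Nat.card V * δ := by
        gcongr
        rw [Nat.card_eq_fintype_card]
        exact_mod_cast P.2.length_lt

end GraphChains

theorem SimpleGraph.Reachable.mem_of_adj_mem {V : Type*} {G : SimpleGraph V} {s : Set V}
    (hs : ∀ u v, G.Adj u v → u ∈ s → v ∈ s) {u v : V} (h : G.Reachable u v) (hu : u ∈ s) :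
    v ∈ s := by
  rw [SimpleGraph.reachable_iff_reflTransGen] at h
  induction h with
  | refl => exact hu
  | tail _ hbc ih => exact hs _ _ hbc ih

theorem List.finite_setOf_length_eq_forall_le (N k : ℕ) :
    {l : List ℕ | l.length = k ∧ ∀ x ∈ l, x ≤ N}.Finite := by
  refine ((List.finite_length_eq (Fin (N + 1)) k).image (List.map Fin.val)).subset ?_
  rintro l ⟨hlen, hle⟩
  refine ⟨l.pmap (fun x hx => ⟨x, Nat.lt_succ_of_le hx⟩) hle, by simpa using hlen, ?_⟩
  simp [List.map_pmap]

namespace MoranPaper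

variable {d : ℕ} {J : Set (Pt d)} {n : ℕ → ℕ} {r : ℕ → ℝ} {R : ℝ}

lemma isWord_append_singleton {w : List ℕ} {a : ℕ} (h : IsWord n (w ++ [a])) :
    IsWord n w ∧ 1 ≤ a ∧ a ≤ n w.length := by
  refine ⟨fun j hj => ?_, ?_⟩
  · simpa [List.getElem_append_left hj] using h j (by simp; omega)
  · simpa using h w.length (by simp)

lemma diam_Jset (M : MoranStructure d J n r) {w : List ℕ} (hw : IsWord n w) :
    Metric.diam (M.Jset w) = prodR r w.length * Metric.diam J := by
  induction w using List.reverseRecOn with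
  | nil => simp [M.root_eq, prodR]
  | append_singleton w a ih =>
    obtain ⟨hw', ha1, ha2⟩ := isWord_append_singleton hw
    rw [M.diam_ratio w hw' a ha1 ha2, ih hw', List.length_append, List.length_singleton,
      prodR, prodR, Finset.prod_range_succ]
    ring

lemma finite_wordsLen (k : ℕ) : (WordsLen n k).Finite := by
  refine (List.finite_setOf_length_eq_forall_le ((Finset.range k).sup n) k).subset ?_
  rintro w ⟨hw, hlen⟩
  refine ⟨hlen, fun x hx => ?_⟩
  obtain ⟨j, hj, rfl⟩ := List.getElem_of_mem hx
  exact (hw j hj).2.trans (Finset.le_sup (Finset.mem_range.2 (hlen ▸ hj)))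

lemma isWord_of_mem_XLevel {m : ℕ} {w : List ℕ} (hw : w ∈ XLevel n r R m) : IsWord n w := by
  unfold XLevel at hw
  split_ifs at hw
  · rw [Set.mem_singleton_iff.1 hw]
    exact fun j hj => absurd hj (Nat.not_lt_zero j)
  · exact hw.1

section MoranData

variable (hD : MoranData d J n r R)
include hD

lemma R_lt_one : R < 1 := by
  have hR : R ≤ r 0 := hD.R_inf ▸ ciInf_le ⟨0, by rintro x ⟨k, rfl⟩; exact (hD.r_pos k).le⟩ 0
  exact hR.trans_lt (hD.r_lt_one 0)

lemma r_le_half (k : ℕ) : r k ≤ 1 / 2 := by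
  have h2 : (2 : ℝ) ≤ n k := by exact_mod_cast hD.two_le k
  nlinarith [hD.nr_le k, hD.r_pos k]

lemma prodR_antitone : Antitone (prodR r) :=
  antitone_nat_of_succ_le fun k => by
    rw [prodR, prodR, Finset.prod_range_succ]
    exact mul_le_of_le_one_right (Finset.prod_nonneg fun j _ => (hD.r_pos j).le)
      (hD.r_lt_one k).le

lemma prodR_le_half_pow (k : ℕ) : prodR r k ≤ (1 / 2) ^ k := by
  calc prodR r k ≤ ∏ _j ∈ Finset.range k, (1 / 2 : ℝ) :=
        Finset.prod_le_prod (fun j _ => (hD.r_pos j).le) fun j _ => r_le_half hD j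
    _ = (1 / 2) ^ k := by rw [Finset.prod_const, Finset.card_range]

lemma exists_XLevel_eq_wordsLen {m : ℕ} (hm : 1 ≤ m) : ∃ k, XLevel n r R m = WordsLen n k := by
  have hex : ∃ k, prodR r k ≤ R ^ m := by
    obtain ⟨k, hk⟩ := exists_pow_lt_of_lt_one (pow_pos hD.R_pos m) (by norm_num : (1 : ℝ) / 2 < 1)
    exact ⟨k, (prodR_le_half_pow hD k).trans hk.le⟩
  refine ⟨Nat.find hex, Set.ext fun w => ?_⟩
  rw [XLevel, if_neg (by omega)]
  refine and_congr_right fun _ => ⟨fun ⟨hle, hlt⟩ => ?_, fun hlen => ?_⟩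
  · refine le_antisymm (by_contra fun h => ?_) (Nat.find_min' hex hle)
    exact hlt.not_ge ((prodR_antitone hD (by omega)).trans (Nat.find_spec hex))
  · rw [hlen]
    refine ⟨Nat.find_spec hex, lt_of_not_ge fun h => ?_⟩
    have hk_pos : Nat.find hex ≠ 0 := by
      intro h0
      have := h0 ▸ Nat.find_spec hex
      simp only [prodR, Finset.range_zero, Finset.prod_empty] at this
      exact this.not_gt (pow_lt_one₀ hD.R_pos.le (R_lt_one hD) (by omega))
    exact Nat.find_min hex (by omega) h

lemma isCompact_Jset (M : MoranStructure d J n r) {w : List ℕ} (hw : IsWord n w) :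
    IsCompact (M.Jset w) := by
  obtain ⟨S, c, hc, hdist, hJw⟩ := M.similar w hw
  have hS : LipschitzWith (Real.toNNReal c) S :=
    LipschitzWith.of_dist_le_mul fun x y => by rw [hdist, Real.coe_toNNReal c hc.le]
  exact hJw ▸ hD.compact.image hS.continuous

lemma dist_le_of_mem_XLevel (M : MoranStructure d J n r) {m : ℕ} (hm : 1 ≤ m) {w : List ℕ}
    (hw : w ∈ XLevel n r R m) : ∀ x ∈ M.Jset w, ∀ y ∈ M.Jset w,
      dist x y ≤ R ^ m * Metric.diam J := by
  rw [XLevel, if_neg (by omega)] at hw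
  obtain ⟨hword, hle, -⟩ := hw
  intro x hx y hy
  calc dist x y ≤ Metric.diam (M.Jset w) :=
        Metric.dist_le_diam_of_mem (isCompact_Jset hD M hword).isBounded hx hy
    _ ≤ R ^ m * Metric.diam J := by
        rw [diam_Jset M hword]
        exact mul_le_mul_of_nonneg_right hle Metric.diam_nonneg

lemma finite_XLevel {m : ℕ} (hm : 1 ≤ m) : (XLevel n r R m).Finite := by
  obtain ⟨k, hk⟩ := exists_XLevel_eq_wordsLen hD hm
  exact hk ▸ finite_wordsLen k

lemma moranSet_subset_biUnion_XLevel (M : MoranStructure d J n r) {m : ℕ} (hm : 1 ≤ m) :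
    MoranSet M ⊆ ⋃ w ∈ XLevel n r R m, M.Jset w := by
  obtain ⟨k, hk⟩ := exists_XLevel_eq_wordsLen hD hm
  rw [hk]
  exact Set.iInter_subset _ k

lemma mem_XLevel_of_horGraph_adj (M : MoranStructure d J n r) {m : ℕ} (hm : 1 ≤ m)
    {u v : List ℕ} (huv : (HorGraph M R).Adj u v) (hu : u ∈ XLevel n r R m) :
    v ∈ XLevel n r R m := by
  obtain ⟨-, m', hm', hu', hv', -⟩ := huv
  obtain ⟨k, hk⟩ := exists_XLevel_eq_wordsLen hD hm
  obtain ⟨k', hk'⟩ := exists_XLevel_eq_wordsLen hD hm'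
  rw [hk] at hu ⊢
  rw [hk'] at hu' hv'
  exact ⟨hv'.1, hv'.2.trans (hu'.2.symm.trans hu.2)⟩

lemma exists_isHCC_subset_XLevel_cover (M : MoranStructure d J n r) {m : ℕ} (hm : 1 ≤ m)
    {t : Set (Pt d)} (ht : t ⊆ MoranSet M) (htc : IsPreconnected t) {p : Pt d} (hp : p ∈ t) :
    ∃ S, IsHCC M R S ∧ S ⊆ XLevel n r R m ∧ t ⊆ ⋃ u ∈ S, M.Jset u := by
  obtain ⟨u₀, hu₀, hpu₀⟩ := Set.mem_iUnion₂.1 (moranSet_subset_biUnion_XLevel hD M hm (ht hp))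
  set C := (HorGraph M R).connectedComponentMk u₀
  have hCX : C.supp ⊆ XLevel n r R m := fun v hv =>
    (SimpleGraph.ConnectedComponent.exact hv).symm.mem_of_adj_mem
      (fun _ _ h => mem_XLevel_of_horGraph_adj hD M hm h) hu₀
  have hCmax := C.maximal_connected_induce_supp
  refine ⟨C.supp, ⟨m, hCX, hCmax.1, fun T hCT _ hT => (hCmax.2 hT hCT).antisymm hCT⟩, hCX,
    htc.subset_biUnion_of_closed_of_inter_nonempty (finite_XLevel hD hm)
      (fun w hw => (isCompact_Jset hD M (isWord_of_mem_XLevel hw)).isClosed)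
      (ht.trans (moranSet_subset_biUnion_XLevel hD M hm)) hCX (fun i hi j hj hij => ?_)
      ⟨p, hp, Set.mem_biUnion rfl hpu₀⟩⟩
  by_cases hji : j = i
  · exact hji ▸ hi
  · have hadj : (HorGraph M R).Adj j i := ⟨hji, m, hm, hj, hCX hi, Set.inter_comm _ _ ▸ hij⟩
    exact (SimpleGraph.ConnectedComponent.connectedComponentMk_eq_of_adj hadj).trans hi

lemma dist_le_ncard_mul_of_connected (M : MoranStructure d J n r) {m : ℕ} (hm : 1 ≤ m)
    {S : Set (List ℕ)} (hSX : S ⊆ XLevel n r R m) (hSfin : S.Finite)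
    (hS : ((HorGraph M R).induce S).Connected) {u v : List ℕ} (hu : u ∈ S) (hv : v ∈ S) :
    ∀ p ∈ M.Jset u, ∀ q ∈ M.Jset v, dist p q ≤ S.ncard * (R ^ m * Metric.diam J) := by
  have := hSfin.to_subtype
  rw [← Nat.card_coe_set_eq]
  exact dist_le_card_mul_of_connected (K := fun w : S => M.Jset w) (u := ⟨u, hu⟩) (v := ⟨v, hv⟩)
    hS (fun _ _ ⟨_, _, _, _, _, hJ⟩ => hJ) fun w => dist_le_of_mem_XLevel hD M hm (hSX w.2)

lemma dist_le_of_isPreconnected (M : MoranStructure d J n r) {L : ℕ}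
    (hL : ∀ T, IsHCC M R T → T.Finite ∧ T.ncard ≤ L) {t : Set (Pt d)} (ht : t ⊆ MoranSet M)
    (htc : IsPreconnected t) {p q : Pt d} (hp : p ∈ t) (hq : q ∈ t) {m : ℕ} (hm : 1 ≤ m) :
    dist p q ≤ L * (R ^ m * Metric.diam J) := by
  obtain ⟨S, hS, hSX, htS⟩ := exists_isHCC_subset_XLevel_cover hD M hm ht htc hp
  obtain ⟨u, hu, hpu⟩ := Set.mem_iUnion₂.1 (htS hp)
  obtain ⟨v, hv, hqv⟩ := Set.mem_iUnion₂.1 (htS hq)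
  obtain ⟨hSfin, hSL⟩ := hL S hS
  obtain ⟨-, -, hSconn, -⟩ := hS
  calc dist p q ≤ S.ncard * (R ^ m * Metric.diam J) :=
        dist_le_ncard_mul_of_connected hD M hm hSX hSfin hSconn hu hv p hpu q hqv
    _ ≤ L * (R ^ m * Metric.diam J) := by
        gcongr
        exact mul_nonneg (pow_nonneg hD.R_pos.le m) Metric.diam_nonneg

end MoranData

end MoranPaper

/-- a Moran set whose induced augmented tree is rearrangeable is totally
disconnected in the Euclidean topology. -/
theorem MoranPaper.statement16 (d : ℕ) (J : Set (MoranPaper.Pt d)) (n : ℕ → ℕ) (r : ℕ → ℝ)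
    (R : ℝ) (hD : MoranPaper.MoranData d J n r R) (M : MoranPaper.MoranStructure d J n r)
    (hre : MoranPaper.Rearrangeable M R) :
    IsTotallyDisconnected (MoranPaper.MoranSet M) := by
  obtain ⟨⟨L, hL⟩, -⟩ := hre
  refine fun t ht htc p hp q hq => dist_le_zero.1 ?_
  have hlim : Tendsto (fun m : ℕ => (L : ℝ) * (R ^ m * Metric.diam J)) atTop (nhds 0) := by
    simpa using ((tendsto_pow_atTop_nhds_zero_of_lt_one hD.R_pos.le
      (R_lt_one hD)).mul_const (Metric.diam J)).const_mul (L : ℝ)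
  exact ge_of_tendsto hlim (eventually_atTop.2
    ⟨1, fun m hm => dist_le_of_isPreconnected hD M hL ht htc hp hq hm⟩)
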